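/- Let (g,[2]_g) be a restricted Lie algebra over F, let h be an F-vector space regarded as a strongly abelian restricted Lie algebra (zero bracket, zero 2-mapping), let D_g be a restricted derivation of (g,[2]_g), and let D_h : h → h be F-linear. Then the following are equivalent: (i) the pair (D_h, D_g) is extensible in every central extension of (g,[2]_g) by h, i.e. for every central extension θ : ĝ → g of restricted Lie algebras with kernel h ([h,ĝ] = 0 and u^[2]_ĝ = 0 for u ∈ h) there exists a restricted derivation D_ĝ of (ĝ,[2]_ĝ) with D_ĝ(u) = D_h(u) for all u ∈ h and θ∘D_ĝ = D_g∘θ; (ii) Φ(D_h,D_g) = 0 on cohomology, i.e. for every 2-cocycle (ψ,ς) of (g,[2]_g) with values in the trivial module h, the 2-cochain (ψ',ς') defined by ψ'(x,y) = D_h(ψ(x,y)) + ψ(D_g(x),y) + ψ(x,D_g(y)) and ς'(x) = D_h(ς(x)) + ψ(x,D_g(x)) is a 2-coboundary: there exists an F-linear map λ : g → h with ψ'(x,y) = λ([x,y]) and ς'(x) = λ(x^[2]_g) for all x,y ∈ g. -/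

import Mathlib

/-!
Choosing a linear section `s` of `θ` identifies a central extension `ĝ` with `h × g`, where the
bracket and the 2-mapping are twisted by the cocycle `ψ(x, y) = [s x, s y] - s [x, y]`,
`ς(x) = (s x)^[2] - s (x^[2])`; conversely every cocycle is realised by such a twisted product.
A linear map `D` of `ĝ` lifting `(D_h, D_g)` is determined by its `h`-component
`λ = π ∘ D ∘ s` on the section, and computing in the twisted model, the failure of `D` to be a
derivation on `[u, v]` (resp. on `u^[2]`) is `i` applied to `λ [x, y] - ψ'(x, y)`
(resp. `λ (x^[2]) - ς'(x)`), where `x, y` are the images of `u, v`. Hence `D` is a restricted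
derivation iff `Φ(D_h, D_g)(ψ, ς)` is the coboundary of `λ`, and both implications follow.
-/

universe u v

section CharTwo

variable {M : Type*} [AddCommGroup M]

theorem neg_eq_self_of_charTwo (F : Type*) [Ring F] [CharP F 2] [Module F M] (v : M) :
    -v = v := by
  rw [neg_eq_iff_add_eq_zero, ← two_smul F v, CharTwo.two_eq_zero, zero_smul]

theorem sub_eq_add_of_charTwo (F : Type*) [Ring F] [CharP F 2] [Module F M] (v w : M) :
    v - w = v + w := by
  rw [sub_eq_add_neg, neg_eq_self_of_charTwo F]

end CharTwo

section TwoMapping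

variable (F : Type*) {L : Type*} [CommRing F] [LieRing L] [LieAlgebra F L]

structure IsTwoMapping (sq : L → L) : Prop where
  lie_left : ∀ u v : L, ⁅sq u, v⁆ = ⁅u, ⁅u, v⁆⁆
  smul : ∀ (a : F) (u : L), sq (a • u) = a ^ 2 • sq u
  add : ∀ u v : L, sq (u + v) = sq u + sq v + ⁅u, v⁆

variable {F}

theorem IsTwoMapping.map_zero {sq : L → L} (hsq : IsTwoMapping F sq) : sq 0 = 0 := by
  simpa using hsq.smul 0 0

end TwoMapping

section Cocycle

variable (F g h : Type*) [CommRing F] [LieRing g] [LieAlgebra F g] [AddCommGroup h] [Module F h]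

structure LieCocycle where
  ψ : g → g → h
  add_smul_left : ∀ (a : F) (x x' y : g), ψ (a • x + x') y = a • ψ x y + ψ x' y
  add_smul_right : ∀ (a : F) (x y y' : g), ψ x (a • y + y') = a • ψ x y + ψ x y'
  self : ∀ x : g, ψ x x = 0
  jacobi : ∀ x y z : g, ψ x ⁅y, z⁆ + ψ y ⁅z, x⁆ + ψ z ⁅x, y⁆ = 0

structure RestrictedCocycle (sq : g → g) extends LieCocycle F g h where
  ς : g → h
  ς_smul : ∀ (a : F) (x : g), ς (a • x) = a ^ 2 • ς x
  ς_add : ∀ x y : g, ς (x + y) = ς x + ς y + ψ x y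
  ψ_sq : ∀ x y : g, ψ (sq x) y + ψ ⁅x, y⁆ x = 0

namespace LieCocycle

variable {F g h} (c : LieCocycle F g h)

theorem map_add_left (x x' y : g) : c.ψ (x + x') y = c.ψ x y + c.ψ x' y := by
  simpa using c.add_smul_left 1 x x' y

theorem map_add_right (x y y' : g) : c.ψ x (y + y') = c.ψ x y + c.ψ x y' := by
  simpa using c.add_smul_right 1 x y y'

theorem map_zero_left (y : g) : c.ψ 0 y = 0 := by
  simpa using c.map_add_left 0 0 y

theorem map_zero_right (x : g) : c.ψ x 0 = 0 := by
  simpa using c.map_add_right x 0 0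

theorem map_smul_right (a : F) (x y : g) : c.ψ x (a • y) = a • c.ψ x y := by
  simpa [c.map_zero_right] using c.add_smul_right a x y 0

theorem map_neg_right (x y : g) : c.ψ x (-y) = -c.ψ x y := by
  simpa using c.map_smul_right (-1) x y

theorem swap (x y : g) : c.ψ y x = -c.ψ x y := by
  have := c.self (x + y)
  rw [c.map_add_left, c.map_add_right, c.map_add_right, c.self, c.self, zero_add, add_zero] at this
  exact eq_neg_of_add_eq_zero_right this

theorem leibniz (x y z : g) : c.ψ x ⁅y, z⁆ = c.ψ ⁅x, y⁆ z + c.ψ y ⁅x, z⁆ := by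
  have := c.jacobi x y z
  rw [← lie_skew z x, c.map_neg_right, c.swap ⁅x, y⁆ z] at this
  linear_combination (norm := abel) this

def TwistedProduct (_c : LieCocycle F g h) : Type _ := h × g

namespace TwistedProduct

instance : AddCommGroup c.TwistedProduct := inferInstanceAs (AddCommGroup (h × g))

instance : Module F c.TwistedProduct := inferInstanceAs (Module F (h × g))

instance : LieRing c.TwistedProduct where
  bracket p q := ((c.ψ p.2 q.2, ⁅p.2, q.2⁆) : h × g)
  add_lie _ _ _ := Prod.ext (c.map_add_left _ _ _) (add_lie _ _ _)
  lie_add _ _ _ := Prod.ext (c.map_add_right _ _ _) (lie_add _ _ _)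
  lie_self _ := Prod.ext (c.self _) (lie_self _)
  leibniz_lie _ _ _ := Prod.ext (c.leibniz _ _ _) (leibniz_lie _ _ _)

instance : LieAlgebra F c.TwistedProduct where
  lie_smul _ _ _ := Prod.ext (c.map_smul_right _ _ _) (lie_smul _ _ _)

end TwistedProduct

end LieCocycle

namespace RestrictedCocycle

variable {F g h} {sq : g → g} (c : RestrictedCocycle F g h sq)

theorem ς_zero : c.ς 0 = 0 := by
  simpa using c.ς_smul 0 0

theorem ψ_sq_left (x y : g) : c.ψ (sq x) y = c.ψ x ⁅x, y⁆ := by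
  rw [eq_neg_of_add_eq_zero_left (c.ψ_sq x y), c.swap, neg_neg]

/-- `Φ(D_h, D_g)` sends `(ψ, ς)` to the coboundary of `lam`, with the signs of arbitrary
characteristic; in characteristic 2 they become the formulas for `ψ'` and `ς'`. -/
def PhiEqCoboundary (Dh : h →ₗ[F] h) (Dg : g →ₗ[F] g) (lam : g →ₗ[F] h) : Prop :=
  (∀ x y : g, c.ψ (Dg x) y + c.ψ x (Dg y) - Dh (c.ψ x y) = lam ⁅x, y⁆) ∧
    ∀ x : g, c.ψ x (Dg x) - Dh (c.ς x) = lam (sq x)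

theorem phiEqCoboundary_iff_of_charTwo [CharP F 2] (Dh : h →ₗ[F] h) (Dg : g →ₗ[F] g)
    (lam : g →ₗ[F] h) :
    c.PhiEqCoboundary Dh Dg lam ↔
      (∀ x y : g, Dh (c.ψ x y) + c.ψ (Dg x) y + c.ψ x (Dg y) = lam ⁅x, y⁆) ∧
        ∀ x : g, Dh (c.ς x) + c.ψ x (Dg x) = lam (sq x) := by
  simp only [PhiEqCoboundary, sub_eq_add_of_charTwo F, add_comm _ (Dh _), ← add_assoc]

end RestrictedCocycle

end Cocycle

section Extension

variable (F g h L : Type*) [CommRing F] [LieRing g] [LieAlgebra F g] [AddCommGroup h]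
  [Module F h] [LieRing L] [LieAlgebra F L]

/-- A central extension `0 → h → L → g → 0` with a linear, not necessarily Lie, splitting
`L = s(g) ⊕ i(h)`. -/
structure LinearlySplitCentralExtension where
  θ : L →ₗ⁅F⁆ g
  i : h →ₗ[F] L
  s : g →ₗ[F] L
  π : L →ₗ[F] h
  θ_s : ∀ x : g, θ (s x) = x
  θ_i : ∀ a : h, θ (i a) = 0
  π_i : ∀ a : h, π (i a) = a
  s_θ_add_i_π : ∀ u : L, s (θ u) + i (π u) = u
  lie_i : ∀ (a : h) (u : L), ⁅i a, u⁆ = 0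

namespace LinearlySplitCentralExtension

variable {F g h L} (E : LinearlySplitCentralExtension F g h L) {sqL : L → L} {sqg : g → g}

theorem θ_surjective : Function.Surjective E.θ := fun x => ⟨E.s x, E.θ_s x⟩

theorem i_injective : Function.Injective E.i := Function.LeftInverse.injective E.π_i

theorem θ_eq_zero_iff (u : L) : E.θ u = 0 ↔ ∃ a : h, E.i a = u := by
  refine ⟨fun hu => ⟨E.π u, ?_⟩, ?_⟩
  · simpa [hu] using E.s_θ_add_i_π u
  · rintro ⟨a, rfl⟩
    exact E.θ_i a

theorem π_s (x : g) : E.π (E.s x) = 0 := by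
  have h := E.s_θ_add_i_π (E.s x)
  rw [E.θ_s, add_eq_left] at h
  simpa [E.π_i] using congrArg E.π h

theorem lie_i_right (a : h) (u : L) : ⁅u, E.i a⁆ = 0 := by
  rw [← lie_skew, E.lie_i, neg_zero]

theorem lie_s_θ_left (u v : L) : ⁅E.s (E.θ u), v⁆ = ⁅u, v⁆ := by
  conv_rhs => rw [← E.s_θ_add_i_π u]
  rw [add_lie, E.lie_i, add_zero]

theorem lie_s_θ_right (u v : L) : ⁅u, E.s (E.θ v)⁆ = ⁅u, v⁆ := by
  conv_rhs => rw [← E.s_θ_add_i_π v]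
  rw [lie_add, E.lie_i_right, add_zero]

def cocycle : LieCocycle F g h where
  ψ x y := E.π ⁅E.s x, E.s y⁆
  add_smul_left a x x' y := by simp only [map_add, map_smul, add_lie, smul_lie]
  add_smul_right a x y y' := by simp only [map_add, map_smul, lie_add, lie_smul]
  self x := by simp only [lie_self, map_zero]
  jacobi x y z := by
    have h (x y z : g) : E.π ⁅E.s x, E.s ⁅y, z⁆⁆ = E.π ⁅E.s x, ⁅E.s y, E.s z⁆⁆ := by
      rw [← E.lie_s_θ_right _ ⁅E.s y, E.s z⁆, LieHom.map_lie, E.θ_s, E.θ_s]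
    simp only [h, ← map_add, lie_jacobi, map_zero]

theorem s_lie_add_i_cocycle (x y : g) : E.s ⁅x, y⁆ + E.i (E.cocycle.ψ x y) = ⁅E.s x, E.s y⁆ := by
  have h := E.s_θ_add_i_π ⁅E.s x, E.s y⁆
  rwa [LieHom.map_lie, E.θ_s, E.θ_s] at h

theorem lie_eq_s_add_i (u v : L) :
    ⁅u, v⁆ = E.s ⁅E.θ u, E.θ v⁆ + E.i (E.cocycle.ψ (E.θ u) (E.θ v)) := by
  rw [E.s_lie_add_i_cocycle, E.lie_s_θ_left, E.lie_s_θ_right]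

def restrictedCocycle (hsq : IsTwoMapping F sqL) (hθ_sq : ∀ u : L, E.θ (sqL u) = sqg (E.θ u)) :
    RestrictedCocycle F g h sqg where
  toLieCocycle := E.cocycle
  ς x := E.π (sqL (E.s x))
  ς_smul a x := by simp only [map_smul, hsq.smul]
  ς_add x y := by simp only [map_add, hsq.add]; rfl
  ψ_sq x y := by
    have h₁ : E.s (sqg x) = E.s (E.θ (sqL (E.s x))) := by rw [hθ_sq, E.θ_s]
    have h₂ : E.s ⁅x, y⁆ = E.s (E.θ ⁅E.s x, E.s y⁆) := by rw [LieHom.map_lie, E.θ_s, E.θ_s]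
    change E.π ⁅E.s (sqg x), E.s y⁆ + E.π ⁅E.s ⁅x, y⁆, E.s x⁆ = 0
    rw [h₁, h₂, E.lie_s_θ_left, E.lie_s_θ_left, hsq.lie_left, ← lie_skew ⁅E.s x, E.s y⁆,
      ← map_add, add_neg_cancel, map_zero]

theorem sq_eq_s_add_i (hsq_add : ∀ u v : L, sqL (u + v) = sqL u + sqL v + ⁅u, v⁆)
    (hsq_i : ∀ a : h, sqL (E.i a) = 0) (hθ_sq : ∀ u : L, E.θ (sqL u) = sqg (E.θ u)) (u : L) :
    sqL u = E.s (sqg (E.θ u)) + E.i (E.π (sqL (E.s (E.θ u)))) := by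
  conv_lhs => rw [← E.s_θ_add_i_π u]
  rw [hsq_add, hsq_i, E.lie_i_right, add_zero, add_zero]
  conv_lhs => rw [← E.s_θ_add_i_π (sqL (E.s (E.θ u)))]
  rw [hθ_sq, E.θ_s]

section Derivation

variable {Dh : h →ₗ[F] h} {Dg : g →ₗ[F] g}

def fiberPart (D : L →ₗ[F] L) : g →ₗ[F] h := E.π ∘ₗ D ∘ₗ E.s

theorem map_s {D : L →ₗ[F] L} (hDθ : ∀ u, E.θ (D u) = Dg (E.θ u)) (x : g) :
    D (E.s x) = E.s (Dg x) + E.i (E.fiberPart D x) := by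
  conv_lhs => rw [← E.s_θ_add_i_π (D (E.s x))]
  rw [hDθ, E.θ_s]
  rfl

theorem map_lie_iff (hDg : ∀ x y : g, Dg ⁅x, y⁆ = ⁅Dg x, y⁆ + ⁅x, Dg y⁆) {D : L →ₗ[F] L}
    (hDθ : ∀ u, E.θ (D u) = Dg (E.θ u)) (hDi : ∀ a, D (E.i a) = E.i (Dh a)) :
    (∀ u v : L, D ⁅u, v⁆ = ⁅D u, v⁆ + ⁅u, D v⁆) ↔
      ∀ x y : g, E.cocycle.ψ (Dg x) y + E.cocycle.ψ x (Dg y) - Dh (E.cocycle.ψ x y) =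
        E.fiberPart D ⁅x, y⁆ := by
  have defect (u v : L) : D ⁅u, v⁆ - (⁅D u, v⁆ + ⁅u, D v⁆) =
      E.i (E.fiberPart D ⁅E.θ u, E.θ v⁆ - (E.cocycle.ψ (Dg (E.θ u)) (E.θ v) +
        E.cocycle.ψ (E.θ u) (Dg (E.θ v)) - Dh (E.cocycle.ψ (E.θ u) (E.θ v)))) := by
    rw [E.lie_eq_s_add_i u v, E.lie_eq_s_add_i (D u) v, E.lie_eq_s_add_i u (D v), hDθ, hDθ,
      map_add, hDi, E.map_s hDθ, hDg]
    simp only [map_add, map_sub]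
    abel
  refine ⟨fun hD x y => ?_, fun hΦ u v => ?_⟩
  · have h := defect (E.s x) (E.s y)
    rw [hD, sub_self, E.θ_s, E.θ_s, eq_comm, ← map_zero E.i] at h
    exact (sub_eq_zero.mp (E.i_injective h)).symm
  · rw [← sub_eq_zero, defect, hΦ, sub_self, map_zero]

theorem map_sq_iff (hsq_add : ∀ u v : L, sqL (u + v) = sqL u + sqL v + ⁅u, v⁆)
    (hsq_i : ∀ a : h, sqL (E.i a) = 0) (hθ_sq : ∀ u : L, E.θ (sqL u) = sqg (E.θ u))
    (hDg : ∀ x : g, Dg (sqg x) = ⁅x, Dg x⁆) {D : L →ₗ[F] L}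
    (hDθ : ∀ u, E.θ (D u) = Dg (E.θ u)) (hDi : ∀ a, D (E.i a) = E.i (Dh a)) :
    (∀ u : L, D (sqL u) = ⁅u, D u⁆) ↔
      ∀ x : g, E.cocycle.ψ x (Dg x) - Dh (E.π (sqL (E.s x))) = E.fiberPart D (sqg x) := by
  have defect (u : L) : D (sqL u) - ⁅u, D u⁆ =
      E.i (E.fiberPart D (sqg (E.θ u)) - (E.cocycle.ψ (E.θ u) (Dg (E.θ u)) -
        Dh (E.π (sqL (E.s (E.θ u)))))) := by
    rw [E.sq_eq_s_add_i hsq_add hsq_i hθ_sq u, E.lie_eq_s_add_i u (D u), hDθ, map_add, hDi,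
      E.map_s hDθ, hDg]
    simp only [map_sub]
    abel
  refine ⟨fun hD x => ?_, fun hΦ u => ?_⟩
  · have h := defect (E.s x)
    rw [hD, sub_self, E.θ_s, eq_comm, ← map_zero E.i] at h
    exact (sub_eq_zero.mp (E.i_injective h)).symm
  · rw [← sub_eq_zero, defect, hΦ, sub_self, map_zero]

def liftDerivation (Dh : h →ₗ[F] h) (Dg : g →ₗ[F] g) (lam : g →ₗ[F] h) : L →ₗ[F] L :=
  E.s ∘ₗ Dg ∘ₗ E.θ.toLinearMap + E.i ∘ₗ (lam ∘ₗ E.θ.toLinearMap + Dh ∘ₗ E.π)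

variable (Dh Dg) (lam : g →ₗ[F] h)

theorem θ_liftDerivation (u : L) : E.θ (E.liftDerivation Dh Dg lam u) = Dg (E.θ u) := by
  simp [liftDerivation, E.θ_s, E.θ_i]

theorem liftDerivation_i (a : h) : E.liftDerivation Dh Dg lam (E.i a) = E.i (Dh a) := by
  simp [liftDerivation, E.θ_i, E.π_i]

theorem fiberPart_liftDerivation : E.fiberPart (E.liftDerivation Dh Dg lam) = lam := by
  ext x
  simp [fiberPart, liftDerivation, E.θ_s, E.π_s, E.π_i]

end Derivation

theorem exists_restrictedDerivation_iff (hsq : IsTwoMapping F sqL)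
    (hsq_i : ∀ a : h, sqL (E.i a) = 0) (hθ_sq : ∀ u : L, E.θ (sqL u) = sqg (E.θ u))
    {Dg : g →ₗ[F] g} (hDg_br : ∀ x y : g, Dg ⁅x, y⁆ = ⁅Dg x, y⁆ + ⁅x, Dg y⁆)
    (hDg_sq : ∀ x : g, Dg (sqg x) = ⁅x, Dg x⁆) (Dh : h →ₗ[F] h) :
    (∃ D : L →ₗ[F] L, (∀ u v : L, D ⁅u, v⁆ = ⁅D u, v⁆ + ⁅u, D v⁆) ∧
        (∀ u : L, D (sqL u) = ⁅u, D u⁆) ∧ (∀ a : h, D (E.i a) = E.i (Dh a)) ∧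
        ∀ u : L, E.θ (D u) = Dg (E.θ u)) ↔
      ∃ lam : g →ₗ[F] h, (E.restrictedCocycle hsq hθ_sq).PhiEqCoboundary Dh Dg lam := by
  constructor
  · rintro ⟨D, hD_br, hD_sq, hDi, hDθ⟩
    exact ⟨E.fiberPart D, (E.map_lie_iff hDg_br hDθ hDi).mp hD_br,
      (E.map_sq_iff hsq.add hsq_i hθ_sq hDg_sq hDθ hDi).mp hD_sq⟩
  · rintro ⟨lam, hΦ_br, hΦ_sq⟩
    have hDθ := E.θ_liftDerivation Dh Dg lam
    have hDi := E.liftDerivation_i Dh Dg lam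
    refine ⟨E.liftDerivation Dh Dg lam, (E.map_lie_iff hDg_br hDθ hDi).mpr ?_,
      (E.map_sq_iff hsq.add hsq_i hθ_sq hDg_sq hDθ hDi).mpr ?_, hDi, hDθ⟩
    all_goals rw [E.fiberPart_liftDerivation]; assumption

end LinearlySplitCentralExtension

end Extension

theorem LinearlySplitCentralExtension.exists_of_exact {F g h L : Type*} [Field F] [LieRing g]
    [LieAlgebra F g] [AddCommGroup h] [Module F h] [LieRing L] [LieAlgebra F L]
    (θ : L →ₗ⁅F⁆ g) (i : h →ₗ[F] L) (hθ : Function.Surjective θ) (hi : Function.Injective i)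
    (hker : ∀ u : L, θ u = 0 ↔ ∃ a : h, i a = u) (hcent : ∀ (a : h) (u : L), ⁅i a, u⁆ = 0) :
    ∃ E : LinearlySplitCentralExtension F g h L, E.θ = θ ∧ E.i = i := by
  obtain ⟨s, hs⟩ := θ.toLinearMap.exists_rightInverse_of_surjective (LinearMap.range_eq_top.mpr hθ)
  obtain ⟨j, hj⟩ := i.exists_leftInverse_of_injective (LinearMap.ker_eq_bot.mpr hi)
  have hθs (x : g) : θ (s x) = x := LinearMap.congr_fun hs x
  have hji (a : h) : j (i a) = a := LinearMap.congr_fun hj a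
  have hθi (a : h) : θ (i a) = 0 := (hker _).mpr ⟨a, rfl⟩
  refine ⟨⟨θ, i, s, j ∘ₗ (LinearMap.id - s ∘ₗ θ.toLinearMap), hθs, hθi, fun a => ?_, fun u => ?_,
    hcent⟩, rfl, rfl⟩
  · simp [hθi, hji]
  · obtain ⟨a, ha⟩ := (hker (u - s (θ u))).mp (by simp [hθs])
    simp only [LinearMap.coe_comp, Function.comp_apply, LinearMap.sub_apply, LinearMap.id_apply,
      LieHom.coe_toLinearMap]
    rw [← ha, hji, ha, add_sub_cancel]

namespace LieCocycle

variable {F g h : Type*} [CommRing F] [LieRing g] [LieAlgebra F g] [AddCommGroup h] [Module F h]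
  (c : LieCocycle F g h)

def twistedSplitting : LinearlySplitCentralExtension F g h c.TwistedProduct where
  θ := { LinearMap.snd F h g with map_lie' := rfl }
  i := LinearMap.inl F h g
  s := LinearMap.inr F h g
  π := LinearMap.fst F h g
  θ_s _ := rfl
  θ_i _ := rfl
  π_i _ := rfl
  s_θ_add_i_π u := Prod.ext (zero_add u.1) (add_zero u.2)
  lie_i _ u := Prod.ext (c.map_zero_left u.2) (zero_lie u.2)

end LieCocycle

namespace RestrictedCocycle

variable {F g h : Type*} [CommRing F] [LieRing g] [LieAlgebra F g] [AddCommGroup h] [Module F h]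
  {sq : g → g} (c : RestrictedCocycle F g h sq)

def twistedSq (p : c.TwistedProduct) : c.TwistedProduct := ((c.ς p.2, sq p.2) : h × g)

theorem isTwoMapping_twistedSq (hsq : IsTwoMapping F sq) : IsTwoMapping F c.twistedSq where
  lie_left p q := Prod.ext (c.ψ_sq_left p.2 q.2) (hsq.lie_left p.2 q.2)
  smul a p := Prod.ext (c.ς_smul a p.2) (hsq.smul a p.2)
  add p q := Prod.ext (c.ς_add p.2 q.2) (hsq.add p.2 q.2)

theorem twistedSq_i (hsq : IsTwoMapping F sq) (a : h) :
    c.twistedSq (c.twistedSplitting.i a) = 0 :=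
  Prod.ext c.ς_zero hsq.map_zero

end RestrictedCocycle

/-- a pair `(D_h, D_g)` is extensible in every central extension of the
restricted Lie algebra `(g,[2])` by the strongly abelian restricted Lie algebra `h` if
and only if the induced operator `Φ(D_h, D_g)` vanishes on the second restricted
cohomology with trivial coefficients, i.e. the image of every 2-cocycle is a
2-coboundary. -/
theorem stmt19
    {F : Type v} [Field F] [CharP F 2]
    {g : Type u} [LieRing g] [LieAlgebra F g]
    {h : Type u} [AddCommGroup h] [Module F h]
    -- restricted structure on g
    (sqg : g → g)
    (hsqg_ad : ∀ x y : g, ⁅sqg x, y⁆ = ⁅x, ⁅x, y⁆⁆)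
    (hsqg_smul : ∀ (a : F) (x : g), sqg (a • x) = a ^ 2 • sqg x)
    (hsqg_add : ∀ x y : g, sqg (x + y) = sqg x + sqg y + ⁅x, y⁆)
    -- a restricted derivation of g
    (Dg : g →ₗ[F] g)
    (hDg_br : ∀ x y : g, Dg ⁅x, y⁆ = ⁅Dg x, y⁆ + ⁅x, Dg y⁆)
    (hDg_sq : ∀ x : g, Dg (sqg x) = ⁅x, Dg x⁆)
    -- a linear map on h
    (Dh : h →ₗ[F] h) :
    -- (i) (D_h, D_g) is extensible in every central extension of g by h:
    ((∀ (gh : Type u) (_ : LieRing gh) (_ : LieAlgebra F gh)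
        (sqgh : gh → gh),
        (∀ u v : gh, ⁅sqgh u, v⁆ = ⁅u, ⁅u, v⁆⁆) →
        (∀ (a : F) (u : gh), sqgh (a • u) = a ^ 2 • sqgh u) →
        (∀ u v : gh, sqgh (u + v) = sqgh u + sqgh v + ⁅u, v⁆) →
        ∀ (θ : gh →ₗ⁅F⁆ g) (i : h →ₗ[F] gh),
          Function.Surjective θ →
          Function.Injective i →
          (∀ u : gh, θ u = 0 ↔ ∃ a : h, i a = u) →
          (∀ (a : h) (v : gh), ⁅i a, v⁆ = 0) →
          (∀ a : h, sqgh (i a) = 0) →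
          (∀ u : gh, θ (sqgh u) = sqg (θ u)) →
          ∃ Dgh : gh →ₗ[F] gh,
            (∀ u v : gh, Dgh ⁅u, v⁆ = ⁅Dgh u, v⁆ + ⁅u, Dgh v⁆) ∧
            (∀ u : gh, Dgh (sqgh u) = ⁅u, Dgh u⁆) ∧
            (∀ a : h, Dgh (i a) = i (Dh a)) ∧
            (∀ u : gh, θ (Dgh u) = Dg (θ u))) ↔
      -- (ii) Φ(D_h, D_g) = 0 on cohomology:
      (∀ (ψ : g → g → h) (ς : g → h),
        (∀ (a : F) (x x' y : g), ψ (a • x + x') y = a • ψ x y + ψ x' y) →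
        (∀ (a : F) (x y y' : g), ψ x (a • y + y') = a • ψ x y + ψ x y') →
        (∀ x : g, ψ x x = 0) →
        (∀ (a : F) (x : g), ς (a • x) = a ^ 2 • ς x) →
        (∀ x y : g, ς (x + y) = ς x + ς y + ψ x y) →
        (∀ x y z : g, ψ x ⁅y, z⁆ + ψ y ⁅z, x⁆ + ψ z ⁅x, y⁆ = 0) →
        (∀ x y : g, ψ (sqg x) y + ψ ⁅x, y⁆ x = 0) →
        ∃ lam : g →ₗ[F] h,
          (∀ x y : g, Dh (ψ x y) + ψ (Dg x) y + ψ x (Dg y) = lam ⁅x, y⁆) ∧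
          (∀ x : g, Dh (ς x) + ψ x (Dg x) = lam (sqg x)))) := by
  have hsqg : IsTwoMapping F sqg := ⟨hsqg_ad, hsqg_smul, hsqg_add⟩
  constructor
  · intro H ψ ς hψ_left hψ_right hψ_self hς_smul hς_add hψ_jacobi hψ_sq
    let c : RestrictedCocycle F g h sqg :=
      ⟨⟨ψ, hψ_left, hψ_right, hψ_self, hψ_jacobi⟩, ς, hς_smul, hς_add, hψ_sq⟩
    let E := c.twistedSplitting
    have hsq := c.isTwoMapping_twistedSq hsqg
    have hD := H _ _ _ _ hsq.lie_left hsq.smul hsq.add E.θ E.i E.θ_surjective E.i_injective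
      E.θ_eq_zero_iff E.lie_i (c.twistedSq_i hsqg) (fun _ => rfl)
    obtain ⟨lam, hΦ⟩ := (E.exists_restrictedDerivation_iff hsq (c.twistedSq_i hsqg) (fun _ => rfl)
      hDg_br hDg_sq Dh).mp hD
    exact ⟨lam, (c.phiEqCoboundary_iff_of_charTwo Dh Dg lam).mp hΦ⟩
  · intro H gh _ _ sqgh hsq_ad hsq_smul hsq_add θ i hθ hi hker hcent hsq_i hθ_sq
    obtain ⟨E, rfl, rfl⟩ := LinearlySplitCentralExtension.exists_of_exact θ i hθ hi hker hcent
    have hsq : IsTwoMapping F sqgh := ⟨hsq_ad, hsq_smul, hsq_add⟩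
    let c := E.restrictedCocycle hsq hθ_sq
    obtain ⟨lam, hΦ⟩ := H c.ψ c.ς c.add_smul_left c.add_smul_right c.self c.ς_smul c.ς_add
      c.jacobi c.ψ_sq
    exact (E.exists_restrictedDerivation_iff hsq hsq_i hθ_sq hDg_br hDg_sq Dh).mpr
      ⟨lam, (c.phiEqCoboundary_iff_of_charTwo Dh Dg lam).mpr hΦ⟩
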